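/- arXiv:1401.7169 — 5 statements merged into one kernel-verified Lean document; each statement's English description precedes it below -/
import Mathlib

section
/- Consider a channel with input alphabet 𝒞 = {c_1,…,c_M}, transition probabilities p_{y|x}, and any (possibly randomized) decoder achieving average error probability P_e under equally likely messages. Let q_y be any auxiliary output distribution. Then the binary hypothesis test between H₁: (x,y) ∼ p_{y|x} p_x and H₀: (x,y) ∼ q_y p_x constructed by declaring H₁ iff the decoder output equals the transmitted message has false-alarm probability exactly 1/M. Consequently, by the Neyman–Pearson lemma, if β(ε) denotes the minimum false-alarm probability over all tests with missed-detection probability at most ε = P_e, then β(P_e) ≤ 1/M, i.e., the code rate R = (1/n)log₂ M satisfies R ≤ −(1/n)log₂ β(P_e). -/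
open MeasureTheory ProbabilityTheory Finset

/-! The decoder yields the test `T i y = P[decoder outputs i | y]`. Its missed-detection probability
is the decoder's error probability `Pe`, and its false-alarm probability is `1/M` because under
`H₀` the output is independent of the message, and `∑ i, T i y = 1`. Hence `β(Pe) ≤ 1/M`. -/

namespace ProbabilityTheory.Kernel

variable {X Y : Type*} [MeasurableSpace X] [MeasurableSpace Y]

lemma integrable_toReal_apply (κ : Kernel Y X) [IsMarkovKernel κ] {s : Set X}
    (hs : MeasurableSet s) (μ : Measure Y) [IsFiniteMeasure μ] :
    Integrable (fun y => (κ y s).toReal) μ :=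
  .of_bound (κ.measurable_coe hs).ennreal_toReal.aestronglyMeasurable 1 <| ae_of_all _ fun y => by
    rw [Real.norm_eq_abs, abs_of_nonneg ENNReal.toReal_nonneg]
    exact measureReal_le_one

lemma sum_integral_toReal_apply_singleton [Fintype X] [MeasurableSingletonClass X]
    (κ : Kernel Y X) [IsMarkovKernel κ] (μ : Measure Y) [IsProbabilityMeasure μ] :
    ∑ x, ∫ y, (κ y {x}).toReal ∂μ = 1 := by
  rw [← integral_finsetSum _ fun x _ => κ.integrable_toReal_apply (measurableSet_singleton x) μ]
  simp [← measureReal_def]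

end ProbabilityTheory.Kernel

section HypothesisTest

variable {Y : Type*} [MeasurableSpace Y] {M : ℕ}

/-- Missed-detection probability of the randomized test `T` (declaring `H₁` with probability
`T x y`) when `H₁ : (x, y) ∼ P x ⊗ uniform`. -/
noncomputable def missedDetection (P : Fin M → Measure Y) (T : Fin M → Y → ℝ) : ℝ :=
  (1 / (M : ℝ)) * ∑ i, ∫ y, (1 - T i y) ∂(P i)

/-- False-alarm probability of the randomized test `T` when `H₀ : (x, y) ∼ uniform ⊗ q`. -/
noncomputable def falseAlarm (q : Measure Y) (T : Fin M → Y → ℝ) : ℝ :=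
  (1 / (M : ℝ)) * ∑ i, ∫ y, T i y ∂q

noncomputable def decoderTest (decoder : Kernel Y (Fin M)) (i : Fin M) (y : Y) : ℝ :=
  (decoder y {i}).toReal

lemma missedDetection_eq [NeZero M] (P : Fin M → Measure Y) [∀ i, IsProbabilityMeasure (P i)]
    (T : Fin M → Y → ℝ) (hT : ∀ i, Integrable (T i) (P i)) :
    missedDetection P T = 1 - (1 / (M : ℝ)) * ∑ i, ∫ y, T i y ∂(P i) := by
  have hM : (M : ℝ) ≠ 0 := NeZero.ne _
  simp only [missedDetection, integral_sub (integrable_const 1) (hT _), integral_const,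
    probReal_univ, smul_eq_mul, mul_one, sum_sub_distrib, sum_const, card_univ, Fintype.card_fin,
    nsmul_eq_mul]
  field_simp

lemma falseAlarm_decoderTest (q : Measure Y) [IsProbabilityMeasure q]
    (decoder : Kernel Y (Fin M)) [IsMarkovKernel decoder] :
    falseAlarm q (decoderTest decoder) = 1 / (M : ℝ) := by
  simp only [falseAlarm, decoderTest]
  rw [decoder.sum_integral_toReal_apply_singleton, mul_one]

lemma csInf_falseAlarm_le (P : Fin M → Measure Y) (q : Measure Y) (ε : ℝ)
    (T : Fin M → Y → ℝ) (hT : ∀ i, Measurable (T i))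
    (hT01 : ∀ i y, T i y ∈ Set.Icc (0 : ℝ) 1)
    (hmiss : missedDetection P T ≤ ε) :
    sInf {f : ℝ | ∃ T : Fin M → Y → ℝ, (∀ i, Measurable (T i)) ∧
      (∀ i y, T i y ∈ Set.Icc (0 : ℝ) 1) ∧
      missedDetection P T ≤ ε ∧ f = falseAlarm q T}
      ≤ falseAlarm q T := by
  refine csInf_le ⟨0, ?_⟩ ⟨T, hT, hT01, hmiss, rfl⟩
  rintro _ ⟨T', -, hT'01, -, rfl⟩
  exact mul_nonneg (by positivity) <| sum_nonneg fun i _ => integral_nonneg fun y => (hT'01 i y).1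

end HypothesisTest

lemma mul_logb_le_neg_mul_logb_of_le_inv {m b : ℝ} (n : ℝ) (hn : 0 ≤ n) (hb : 0 < b)
    (hbm : b ≤ 1 / m) : n * Real.logb 2 m ≤ -n * Real.logb 2 b := by
  have : Real.logb 2 b ≤ -Real.logb 2 m := by
    simpa [Real.logb_inv] using Real.logb_le_logb_of_le (b := 2) one_lt_two hb hbm
  nlinarith

theorem stmt_4_general {Y : Type*} [MeasurableSpace Y] (M : ℕ) (hM : 0 < M)
    (channel : Fin M → Measure Y) (hchan : ∀ i, IsProbabilityMeasure (channel i))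
    (q : Measure Y) (hq : IsProbabilityMeasure q)
    (decoder : Kernel Y (Fin M)) (hdec : IsMarkovKernel decoder)
    (Pe : ℝ)
    (hPe : Pe = 1 - (1 / (M : ℝ)) *
      ∑ i, ∫ y, ((decoder y) {i}).toReal ∂(channel i))
    (β : ℝ → ℝ)
    (hβ : ∀ ε : ℝ, β ε = sInf {f : ℝ |
      ∃ T : Fin M → Y → ℝ,
        (∀ i, Measurable (T i)) ∧
        (∀ i y, T i y ∈ Set.Icc (0 : ℝ) 1) ∧
        (1 / (M : ℝ)) * ∑ i, ∫ y, (1 - T i y) ∂(channel i) ≤ ε ∧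
        f = (1 / (M : ℝ)) * ∑ i, ∫ y, T i y ∂q})
    (n : ℕ) (R : ℝ) (hR : R = (1 / (n : ℝ)) * Real.logb 2 M) :
    (1 / (M : ℝ)) * ∑ i, ∫ y, ((decoder y) {i}).toReal ∂q = 1 / (M : ℝ) ∧
    β Pe ≤ 1 / (M : ℝ) ∧
    (0 < β Pe → R ≤ -(1 / (n : ℝ)) * Real.logb 2 (β Pe)) := by
  have : NeZero M := ⟨hM.ne'⟩
  have hfalse : falseAlarm q (decoderTest decoder) = 1 / (M : ℝ) :=
    falseAlarm_decoderTest q decoder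
  have hmiss : missedDetection channel (decoderTest decoder) = Pe := by
    rw [hPe, missedDetection_eq channel (decoderTest decoder) fun i =>
      decoder.integrable_toReal_apply (measurableSet_singleton i) _]
    rfl
  have hβPe : β Pe ≤ 1 / (M : ℝ) := by
    rw [hβ]
    exact (csInf_falseAlarm_le channel q Pe _
      (fun i => (decoder.measurable_coe (measurableSet_singleton i)).ennreal_toReal)
      (fun i y => ⟨ENNReal.toReal_nonneg, measureReal_le_one⟩) hmiss.le).trans hfalse.le
  refine ⟨hfalse, hβPe, fun hpos => ?_⟩
  rw [hR]
  exact mul_logb_le_neg_mul_logb_of_le_inv _ (by positivity) hpos hβPe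

/-- Meta-converse / Neyman–Pearson bound. Messages are uniform on `Fin M`; the
channel sends message `i` to output law `channel i`; a (possibly randomized)
decoder is a Markov kernel `decoder` from outputs to messages, achieving average
error probability `Pe`. For any auxiliary output law `q`, the binary hypothesis
test on `(x,y)` that declares `H₁` iff the decoder output equals the transmitted
message has false-alarm probability exactly `1/M`; consequently the minimum
false-alarm probability `β(Pe)` over all (randomized) tests with
missed-detection probability at most `Pe` satisfies `β(Pe) ≤ 1/M`, i.e. the rate
`R = (1/n)log₂ M` satisfies `R ≤ −(1/n)log₂ β(Pe)`. -/
theorem stmt_4 {Y : Type*} [MeasurableSpace Y] (M : ℕ) (hM : 0 < M)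
    (channel : Fin M → Measure Y) (hchan : ∀ i, IsProbabilityMeasure (channel i))
    (q : Measure Y) (hq : IsProbabilityMeasure q)
    (decoder : Kernel Y (Fin M)) (hdec : IsMarkovKernel decoder)
    (Pe : ℝ)
    (hPe : Pe = 1 - (1 / (M : ℝ)) *
      ∑ i, ∫ y, ((decoder y) {i}).toReal ∂(channel i))
    (β : ℝ → ℝ)
    (hβ : ∀ ε : ℝ, β ε = sInf {f : ℝ |
      ∃ T : Fin M → Y → ℝ,
        (∀ i, Measurable (T i)) ∧
        (∀ i y, T i y ∈ Set.Icc (0 : ℝ) 1) ∧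
        (1 / (M : ℝ)) * ∑ i, ∫ y, (1 - T i y) ∂(channel i) ≤ ε ∧
        f = (1 / (M : ℝ)) * ∑ i, ∫ y, T i y ∂q})
    (n : ℕ) (hn : 0 < n) (R : ℝ) (hR : R = (1 / (n : ℝ)) * Real.logb 2 M) :
    (1 / (M : ℝ)) * ∑ i, ∫ y, ((decoder y) {i}).toReal ∂q = 1 / (M : ℝ) ∧
    β Pe ≤ 1 / (M : ℝ) ∧
    (0 < β Pe → R ≤ -(1 / (n : ℝ)) * Real.logb 2 (β Pe)) :=
  stmt_4_general M hM channel hchan q hq decoder hdec Pe hPe β hβ n R hR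
end

section
/- Fix γ > 0 and set s_γ = sinh(γ). For φ ∈ (0, π), define r(φ) = asinh(s_γ/sinc(φ)) with sinc(φ) = sin(φ)/φ. Then e^{r(φ)−γ} sinc(φ) = (s_γ + √(s_γ² + sinc²(φ)))/(s_γ + cosh(γ)), and consequently 1 − ((cosh(γ)−s_γ)/(cosh(γ)+s_γ))(1 − sinc²(φ)) ≤ e^{r(φ)−γ} sinc(φ) ≤ 1. -/
/-!
Since `exp (arsinh x) = x + √(1 + x²)` and `exp γ = s_γ + c_γ`, the identity is pure algebra.
With `e = c_γ - s_γ = exp (-γ)`, the relation `c_γ² - s_γ² = 1` gives `2 s_γ e + e² = 1`, so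
`(s_γ + e t²)² = s_γ² + t² - e² t² (1 - t²)`; hence `s_γ + e t² ≤ √(s_γ² + t²) ≤ c_γ` whenever
`t² ≤ 1`, which are the two bounds after dividing by `s_γ + c_γ`.
-/

open Real

lemma exp_arsinh_div_mul (s : ℝ) {t : ℝ} (ht : 0 < t) :
    exp (arsinh (s / t)) * t = s + √(s ^ 2 + t ^ 2) := by
  have hsqrt : √(1 + (s / t) ^ 2) = √(s ^ 2 + t ^ 2) / t := by
    rw [← sqrt_sq ht.le, ← sqrt_div' _ (sq_nonneg t), sqrt_sq ht.le]
    congr 1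
    field_simp
    ring
  rw [exp_arsinh, hsqrt]
  field_simp

lemma exp_arsinh_div_sub_mul (γ s : ℝ) {t : ℝ} (ht : 0 < t) :
    exp (arsinh (s / t) - γ) * t = (s + √(s ^ 2 + t ^ 2)) / (sinh γ + cosh γ) := by
  rw [sinh_add_cosh, exp_sub, div_mul_eq_mul_div, exp_arsinh_div_mul s ht]

lemma sqrt_sinh_sq_add_sq_le_cosh (γ : ℝ) {t : ℝ} (ht : t ^ 2 ≤ 1) :
    √(sinh γ ^ 2 + t ^ 2) ≤ cosh γ := by
  rw [sqrt_le_left (cosh_pos γ).le, cosh_sq]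
  linarith

lemma sinh_add_mul_sq_le_sqrt (γ : ℝ) {t : ℝ} (ht : t ^ 2 ≤ 1) :
    sinh γ + (cosh γ - sinh γ) * t ^ 2 ≤ √(sinh γ ^ 2 + t ^ 2) := by
  apply le_sqrt_of_sq_le
  have hdefect : sinh γ ^ 2 + t ^ 2 - (sinh γ + (cosh γ - sinh γ) * t ^ 2) ^ 2
      = (cosh γ - sinh γ) ^ 2 * t ^ 2 * (1 - t ^ 2) := by
    linear_combination (-t ^ 2) * cosh_sq_sub_sinh_sq γ
  linarith [mul_nonneg (mul_nonneg (sq_nonneg (cosh γ - sinh γ)) (sq_nonneg t))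
    (sub_nonneg.mpr ht)]

theorem stmt_10_general (γ : ℝ) (φ : ℝ) (hφ : φ ∈ Set.Ioo 0 Real.pi) :
    Real.exp (Real.arsinh (Real.sinh γ / (Real.sin φ / φ)) - γ) * (Real.sin φ / φ) =
      (Real.sinh γ + Real.sqrt (Real.sinh γ ^ 2 + (Real.sin φ / φ) ^ 2)) /
        (Real.sinh γ + Real.cosh γ) ∧
    1 - ((Real.cosh γ - Real.sinh γ) / (Real.cosh γ + Real.sinh γ)) *
          (1 - (Real.sin φ / φ) ^ 2) ≤
      Real.exp (Real.arsinh (Real.sinh γ / (Real.sin φ / φ)) - γ) * (Real.sin φ / φ) ∧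
    Real.exp (Real.arsinh (Real.sinh γ / (Real.sin φ / φ)) - γ) * (Real.sin φ / φ) ≤ 1 := by
  obtain ⟨hφ0, hφπ⟩ := hφ
  have ht : 0 < sin φ / φ := div_pos (sin_pos_of_pos_of_lt_pi hφ0 hφπ) hφ0
  have ht2 : (sin φ / φ) ^ 2 ≤ 1 := by
    rw [sq_le_one_iff_abs_le_one, ← sinc_of_ne_zero hφ0.ne']
    exact abs_sinc_le_one φ
  have hpos : 0 < sinh γ + cosh γ := by rw [sinh_add_cosh]; exact exp_pos γ
  rw [exp_arsinh_div_sub_mul γ _ ht]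
  refine ⟨rfl, ?_, ?_⟩
  · calc 1 - (cosh γ - sinh γ) / (cosh γ + sinh γ) * (1 - (sin φ / φ) ^ 2)
        = (sinh γ + (sinh γ + (cosh γ - sinh γ) * (sin φ / φ) ^ 2)) / (sinh γ + cosh γ) := by
          field_simp
          ring
      _ ≤ _ := by gcongr; exact sinh_add_mul_sq_le_sqrt γ ht2
  · rw [div_le_one hpos]
    linarith [sqrt_sinh_sq_add_sq_le_cosh γ ht2]

/-- For `γ > 0`, `s_γ = sinh γ`, `φ ∈ (0,π)`, `sinc φ = sin φ / φ`,
`r(φ) = arsinh(s_γ / sinc φ)`: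
`e^{r(φ)−γ} sinc φ = (s_γ + √(s_γ² + sinc² φ))/(s_γ + cosh γ)`, and hence
`1 − ((cosh γ − s_γ)/(cosh γ + s_γ))(1 − sinc² φ) ≤ e^{r(φ)−γ} sinc φ ≤ 1`. -/
theorem stmt_10 (γ : ℝ) (hγ : 0 < γ) (φ : ℝ) (hφ : φ ∈ Set.Ioo 0 Real.pi) :
    Real.exp (Real.arsinh (Real.sinh γ / (Real.sin φ / φ)) - γ) * (Real.sin φ / φ) =
      (Real.sinh γ + Real.sqrt (Real.sinh γ ^ 2 + (Real.sin φ / φ) ^ 2)) /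
        (Real.sinh γ + Real.cosh γ) ∧
    1 - ((Real.cosh γ - Real.sinh γ) / (Real.cosh γ + Real.sinh γ)) *
          (1 - (Real.sin φ / φ) ^ 2) ≤
      Real.exp (Real.arsinh (Real.sinh γ / (Real.sin φ / φ)) - γ) * (Real.sin φ / φ) ∧
    Real.exp (Real.arsinh (Real.sinh γ / (Real.sin φ / φ)) - γ) * (Real.sin φ / φ) ≤ 1 :=
  stmt_10_general γ φ hφ
end

section
/- Fix γ > 0 and s_γ = sinh(γ), c_γ = cosh(γ). For φ ∈ (0,π) let r(φ) = asinh(s_γ/sinc(φ)), α(x) = c_γ − cosh(x) + s_γ(x−γ), and h(φ) = (1 − cos(φ))cosh(r(φ)) + α(r(φ)). Then h(φ) ≥ 0 and h(φ) ≤ (1 − cos(φ))cosh(r(φ)) for all φ ∈ (0,π). -/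
/-!
Write `R = r φ`, so that `sinh R = sinh γ · φ / sin φ ≥ sinh γ` and hence `R ≥ γ`.
The upper bound is `α R ≤ 0`, the tangent-line inequality for the convex function `cosh`
at `γ`. For the lower bound, `h φ = cosh γ - cos φ · cosh R + sinh γ · (R - γ)`, and the
last term is nonnegative. Since `φ cos φ ≤ sin φ` on `[0, π]`, we get
`cos φ · sinh R ≤ sinh γ`, and then `cos φ · cosh R ≤ cosh γ` follows from
`cosh² = 1 + sinh²` because `cos φ ≤ 1`.
-/

open Real

lemma cosh_add_sinh_mul_sub_le_cosh (a b : ℝ) : cosh a + sinh a * (b - a) ≤ cosh b := by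
  have h₁ := mul_le_mul_of_nonneg_left (add_one_le_exp (b - a)) (exp_pos a).le
  have h₂ := mul_le_mul_of_nonneg_left (add_one_le_exp (a - b)) (exp_pos (-a)).le
  rw [← exp_add, add_sub_cancel] at h₁
  rw [← exp_add, show -a + (a - b) = -b by ring] at h₂
  rw [cosh_eq, cosh_eq, sinh_eq]
  linarith

lemma mul_cos_le_sin {φ : ℝ} (h₀ : 0 ≤ φ) (hπ : φ ≤ π) : φ * cos φ ≤ sin φ := by
  rcases le_or_gt (cos φ) 0 with hcos | hcos
  · exact (mul_nonpos_of_nonneg_of_nonpos h₀ hcos).trans (sin_nonneg_of_nonneg_of_le_pi h₀ hπ)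
  · have hφ : φ < π / 2 := by
      by_contra! hφ
      linarith [cos_nonpos_of_pi_div_two_le_of_le hφ (by linarith [pi_pos])]
    have := le_tan h₀ hφ
    rwa [tan_eq_sin_div_cos, le_div_iff₀ hcos] at this

lemma mul_cosh_le_cosh_of_mul_sinh_le {c x y : ℝ} (hc : c ≤ 1) (hx : 0 ≤ x)
    (h : c * sinh x ≤ sinh y) : c * cosh x ≤ cosh y := by
  rcases le_or_gt c 0 with hc₀ | hc₀
  · nlinarith [cosh_pos x, cosh_pos y]
  · have hsinh : 0 ≤ c * sinh x := mul_nonneg hc₀.le (sinh_nonneg_iff.2 hx)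
    have hsq : (c * sinh x) ^ 2 ≤ sinh y ^ 2 := pow_le_pow_left₀ hsinh h 2
    refine (pow_le_pow_iff_left₀ (by positivity) (cosh_pos y).le two_ne_zero).1 ?_
    calc (c * cosh x) ^ 2 = c ^ 2 + (c * sinh x) ^ 2 := by rw [mul_pow, cosh_sq]; ring
      _ ≤ 1 + sinh y ^ 2 := add_le_add (pow_le_one₀ hc₀.le hc) hsq
      _ = cosh y ^ 2 := (cosh_sq' y).symm

/-- For `γ > 0`, `r(φ) = arsinh(sinh γ / (sin φ / φ))`,
`α(x) = cosh γ − cosh x + sinh γ (x − γ)`, and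
`h(φ) = (1 − cos φ) cosh(r φ) + α(r φ)`, one has
`0 ≤ h(φ) ≤ (1 − cos φ) cosh(r φ)` on `(0, π)`. -/
theorem stmt_12 (γ : ℝ) (hγ : 0 < γ) (r α h : ℝ → ℝ)
    (hr : ∀ φ, r φ = Real.arsinh (Real.sinh γ / (Real.sin φ / φ)))
    (hα : ∀ x, α x = Real.cosh γ - Real.cosh x + Real.sinh γ * (x - γ))
    (hh : ∀ φ, h φ = (1 - Real.cos φ) * Real.cosh (r φ) + α (r φ)) :
    ∀ φ ∈ Set.Ioo 0 Real.pi,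
      0 ≤ h φ ∧ h φ ≤ (1 - Real.cos φ) * Real.cosh (r φ) := by
  rintro φ ⟨hφ₀, hφπ⟩
  have hsinc₀ : 0 < sin φ / φ := div_pos (sin_pos_of_pos_of_lt_pi hφ₀ hφπ) hφ₀
  have hsinc₁ : sin φ / φ ≤ 1 := (div_le_one hφ₀).2 (sin_le hφ₀.le)
  have hS : 0 ≤ sinh γ := sinh_nonneg_iff.2 hγ.le
  have hsinhr : sinh (r φ) = sinh γ / (sin φ / φ) := by rw [hr, sinh_arsinh]
  have hγr : γ ≤ r φ := by
    rw [← sinh_le_sinh, hsinhr]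
    exact le_div_self hS hsinc₀ hsinc₁
  have hcos_sinh : cos φ * sinh (r φ) ≤ sinh γ := by
    have hcos : cos φ ≤ sin φ / φ := by
      rw [le_div_iff₀ hφ₀, mul_comm]
      exact mul_cos_le_sin hφ₀.le hφπ.le
    calc cos φ * sinh (r φ) ≤ sin φ / φ * (sinh γ / (sin φ / φ)) := by
          rw [hsinhr]; exact mul_le_mul_of_nonneg_right hcos (div_nonneg hS hsinc₀.le)
      _ = sinh γ := mul_div_cancel₀ _ hsinc₀.ne'
  have hcos_cosh := mul_cosh_le_cosh_of_mul_sinh_le (cos_le_one φ) (hγ.le.trans hγr) hcos_sinh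
  rw [hh, hα]
  constructor
  · linarith [mul_nonneg hS (sub_nonneg.2 hγr)]
  · linarith [cosh_add_sinh_mul_sub_le_cosh γ (r φ)]
end

section
/- Fix Ω > 0 and n ≥ 1, and define γ̄ = (1/2)ln(1+Ω). For λ' related to γ by λ' = Ω/(4 sinh²(γ)), the choice γ = γ̄ gives λ' = Ω/(4 sinh²(γ̄)) and then θ_FA(γ̄) := ln(Ω/(2 sinh(γ̄))) − ln(1+Ω) = −γ̄, and v_FA(γ̄) := −α(θ_FA(γ̄))/sinh(γ̄) = ln(1+Ω), where α(x) = cosh(γ̄) − cosh(x) + sinh(γ̄)(x − γ̄). -/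
/-! Writing `γ̄ = (1/2) ln(1+Ω)` as `exp (2γ̄) = 1 + Ω`, the identity
`2 sinh γ · exp γ = exp (2γ) - 1` shows `Ω / (2 sinh γ̄) = exp γ̄`, so `θ_FA(γ̄) = γ̄ - 2γ̄ = -γ̄`.
Since `cosh` is even, `α(-γ̄) = -2γ̄ sinh γ̄`, and dividing by `-sinh γ̄` gives `2γ̄ = ln(1+Ω)`. -/

open Real

lemma Real.two_mul_sinh_mul_exp (x : ℝ) : 2 * sinh x * exp x = exp (2 * x) - 1 := by
  rw [sinh_eq, two_mul x, exp_add, exp_neg]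
  field_simp

lemma Real.exp_two_mul_sub_one_div_two_mul_sinh {x : ℝ} (hx : x ≠ 0) :
    (exp (2 * x) - 1) / (2 * sinh x) = exp x := by
  have hsinh : sinh x ≠ 0 := sinh_ne_zero.mpr hx
  rw [← two_mul_sinh_mul_exp]
  field_simp

theorem stmt_16_general (Ω : ℝ) (hΩ : 0 < Ω)
    (γbar : ℝ) (hγbar : γbar = (1 / 2) * Real.log (1 + Ω))
    (α : ℝ → ℝ)
    (hα : ∀ x, α x = Real.cosh γbar - Real.cosh x + Real.sinh γbar * (x - γbar)) :
    Real.log (Ω / (2 * Real.sinh γbar)) - Real.log (1 + Ω) = -γbar ∧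
    -α (Real.log (Ω / (2 * Real.sinh γbar)) - Real.log (1 + Ω)) / Real.sinh γbar =
      Real.log (1 + Ω) := by
  have hlog : log (1 + Ω) = 2 * γbar := by rw [hγbar]; ring
  have hγpos : 0 < γbar := by have := log_pos (by linarith : 1 < 1 + Ω); linarith
  have hexp : exp (2 * γbar) = 1 + Ω := by rw [← hlog, exp_log (by linarith)]
  have hθ : log (Ω / (2 * sinh γbar)) - log (1 + Ω) = -γbar := by
    have harg : Ω / (2 * sinh γbar) = exp γbar := by
      rw [← exp_two_mul_sub_one_div_two_mul_sinh hγpos.ne', hexp, add_sub_cancel_left]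
    rw [harg, log_exp, hlog]
    ring
  have hαθ : α (-γbar) = -(2 * γbar * sinh γbar) := by rw [hα, cosh_neg]; ring
  refine ⟨hθ, ?_⟩
  rw [hθ, hαθ, neg_neg, mul_div_assoc, div_self (sinh_pos_iff.mpr hγpos).ne', mul_one, hlog]

/-- At `γ = γ̄ = (1/2) ln(1+Ω)` one has `θ_FA(γ̄) = ln(Ω/(2 sinh γ̄)) − ln(1+Ω) = −γ̄`
and `v_FA(γ̄) = −α(θ_FA(γ̄))/sinh γ̄ = ln(1+Ω)`, where
`α(x) = cosh γ̄ − cosh x + sinh γ̄ (x − γ̄)`. -/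
theorem stmt_16 (n : ℕ) (hn : 1 ≤ n) (Ω : ℝ) (hΩ : 0 < Ω)
    (γbar : ℝ) (hγbar : γbar = (1 / 2) * Real.log (1 + Ω))
    (α : ℝ → ℝ)
    (hα : ∀ x, α x = Real.cosh γbar - Real.cosh x + Real.sinh γbar * (x - γbar)) :
    Real.log (Ω / (2 * Real.sinh γbar)) - Real.log (1 + Ω) = -γbar ∧
    -α (Real.log (Ω / (2 * Real.sinh γbar)) - Real.log (1 + Ω)) / Real.sinh γbar =
      Real.log (1 + Ω) :=
  stmt_16_general Ω hΩ γbar hγbar α hα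
end

section
/- Let q(x) = e^{x²/2} Q(x) where Q is the Gaussian complementary CCDF, and fix n ≥ 1 and P_e ∈ (0, 1/2). The equation q(√(n(λ'−1)²/2)) · e^{−(n/2)(λ'−1−ln λ')} = P_e has a solution λ' > 1, and as n → ∞ this solution satisfies λ' = 1 + √(2x/n) + o(1/√n) where x solves Q(√x) = P_e; consequently the asymptotic excess-power expression 10 log₁₀(λ') satisfies 10 log₁₀(λ') ∼ 10 log₁₀(e) · √(2/n) · Q⁻¹(P_e). -/
open Real Filter Asymptotics

/-- The standard Gaussian complementary CDF. -/
noncomputable def gaussQ (x : ℝ) : ℝ :=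
  ∫ t in Set.Ioi x, Real.exp (-t ^ 2 / 2) / Real.sqrt (2 * Real.pi)

noncomputable def gaussq (x : ℝ) : ℝ := Real.exp (x ^ 2 / 2) * gaussQ x

/-!
Write `d = λ' - 1` and `s = √(n/2) d`, the argument of `q`. Since `q(s) = e^{s²/2} Q(s)`, the
equation reads `Q(s) = P_e e^{-ε}` with `ε = (n/2)(ln λ' - d + d²/2) = O(s² d)`. Mills' inequality
`Q(s) ≤ φ(s)/s` gives `q(s) ≤ 1/(s√(2π))`, and the exponential factor is at most `1`, so
`q(s) ≥ P_e` bounds `s`. Hence `d = O(1/√n)`, `ε → 0` and `Q(s) → P_e = Q(√x)`; strict monotonicity of `Q`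
forces `s → √x`, which gives both asymptotic claims (using `ln λ' ∼ λ' - 1` as `λ' → 1`).
Existence is the intermediate value theorem between `λ' = 1`, where the left side is
`q(0) = 1/2`, and a `λ'` making `s` so large that `q(s) < P_e`.
-/

open MeasureTheory ProbabilityTheory Set Topology

local notation "φ" => gaussianPDFReal 0 1

lemma gaussianPDFReal_zero_one (t : ℝ) : φ t = exp (-t ^ 2 / 2) / √(2 * π) := by
  simp [gaussianPDFReal, div_eq_inv_mul]

lemma gaussQ_eq_integral (x : ℝ) : gaussQ x = ∫ t in Ioi x, φ t := by
  simp only [gaussQ, gaussianPDFReal_zero_one]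

lemma gaussQ_eq_intervalIntegral_add {a b : ℝ} (hab : a ≤ b) :
    gaussQ a = (∫ t in a..b, φ t) + gaussQ b := by
  rw [gaussQ_eq_integral, gaussQ_eq_integral, intervalIntegral.integral_of_le hab,
    ← setIntegral_union (Ioc_disjoint_Ioi le_rfl) measurableSet_Ioi
      (integrable_gaussianPDFReal 0 1).integrableOn (integrable_gaussianPDFReal 0 1).integrableOn,
    Ioc_union_Ioi_eq_Ioi hab]

lemma gaussQ_strictAnti : StrictAnti gaussQ := fun a b hab => by
  have hsplit := gaussQ_eq_intervalIntegral_add hab.le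
  have hpos : 0 < ∫ t in a..b, φ t :=
    intervalIntegral.intervalIntegral_pos_of_pos (integrable_gaussianPDFReal 0 1).intervalIntegrable
      (fun t => gaussianPDFReal_pos 0 1 t one_ne_zero) hab
  linarith

lemma gaussQ_nonneg (x : ℝ) : 0 ≤ gaussQ x := by
  rw [gaussQ_eq_integral]
  exact setIntegral_nonneg measurableSet_Ioi fun t _ => gaussianPDFReal_nonneg 0 1 t

@[fun_prop]
lemma continuous_gaussQ : Continuous gaussQ := by
  have hprim (x : ℝ) : gaussQ x = gaussQ 0 - ∫ t in (0 : ℝ)..x, φ t := by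
    rcases le_total 0 x with h | h
    · rw [gaussQ_eq_intervalIntegral_add h]; ring
    · rw [gaussQ_eq_intervalIntegral_add h, intervalIntegral.integral_symm]; ring
  rw [funext hprim]
  exact continuous_const.sub <| intervalIntegral.continuous_primitive
    (fun _ _ => (integrable_gaussianPDFReal 0 1).intervalIntegrable) 0

lemma gaussQ_zero : gaussQ 0 = 1 / 2 := by
  have h : ∫ t in Ioi (0 : ℝ), exp (-t ^ 2 / 2) = √(2 * π) / 2 := by
    rw [show (fun t : ℝ => exp (-t ^ 2 / 2)) = fun t => exp (-(1 / 2) * t ^ 2) by ext; ring_nf,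
      integral_gaussian_Ioi, show π / (1 / 2) = 2 * π by ring]
  rw [gaussQ, integral_div, h]
  field_simp

lemma hasDerivAt_gaussianPDFReal_zero_one (t : ℝ) : HasDerivAt φ (-t * φ t) t := by
  have h : HasDerivAt (fun x : ℝ => -x ^ 2 / 2) (-t) t :=
    ((hasDerivAt_pow 2 t).fun_neg.div_const 2).congr_deriv (by push_cast; ring)
  simp only [funext gaussianPDFReal_zero_one]
  exact (h.exp.div_const _).congr_deriv (by ring)

lemma tendsto_gaussianPDFReal_atTop : Tendsto φ atTop (𝓝 0) := by
  simp only [funext gaussianPDFReal_zero_one, neg_div]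
  simpa using ((tendsto_exp_atBot.comp (tendsto_neg_atTop_atBot.comp
    ((tendsto_pow_atTop two_ne_zero).atTop_div_const two_pos))).div_const (√(2 * π)))

lemma integrable_mul_gaussianPDFReal : Integrable fun t => t * φ t := by
  simp only [gaussianPDFReal_zero_one, mul_div_assoc']
  refine ((integrable_mul_exp_neg_mul_sq (b := 1 / 2) (by norm_num)).div_const (√(2 * π))).congr
    (ae_of_all _ fun t => ?_)
  ring_nf

lemma integral_Ioi_mul_gaussianPDFReal (s : ℝ) : ∫ t in Ioi s, t * φ t = φ s := by
  simpa using integral_Ioi_of_hasDerivAt_of_tendsto' (a := s)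
    (fun t _ => (hasDerivAt_gaussianPDFReal_zero_one t).neg)
    (by simpa using integrable_mul_gaussianPDFReal.integrableOn) tendsto_gaussianPDFReal_atTop.neg

lemma gaussQ_le_gaussianPDFReal_div {s : ℝ} (hs : 0 < s) : gaussQ s ≤ φ s / s := by
  rw [gaussQ_eq_integral, ← integral_Ioi_mul_gaussianPDFReal, ← integral_div]
  refine setIntegral_mono_on (integrable_gaussianPDFReal 0 1).integrableOn
    (integrable_mul_gaussianPDFReal.div_const s).integrableOn measurableSet_Ioi fun t ht => ?_
  rw [mul_div_right_comm]
  exact le_mul_of_one_le_left (gaussianPDFReal_nonneg 0 1 t) ((one_le_div hs).2 (le_of_lt ht))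

lemma gaussq_le_inv {s : ℝ} (hs : 0 < s) : gaussq s ≤ (s * √(2 * π))⁻¹ := by
  have hQ := mul_le_mul_of_nonneg_left (gaussQ_le_gaussianPDFReal_div hs) (exp_nonneg (s ^ 2 / 2))
  rwa [gaussianPDFReal_zero_one, div_div, mul_div_assoc', ← exp_add, neg_div, add_neg_cancel,
    exp_zero, one_div, mul_comm √(2 * π)] at hQ

lemma le_inv_of_le_gaussq {p s : ℝ} (hp : 0 < p) (hs : 0 < s) (h : p ≤ gaussq s) :
    s ≤ (p * √(2 * π))⁻¹ := by
  have h2 := h.trans (gaussq_le_inv hs)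
  rw [le_inv_comm₀ hp (by positivity)] at h2
  rwa [mul_inv, ← div_eq_mul_inv, le_div_iff₀ (by positivity)]

lemma gaussq_nonneg (s : ℝ) : 0 ≤ gaussq s :=
  mul_nonneg (exp_nonneg _) (gaussQ_nonneg s)

lemma tendsto_gaussq_atTop : Tendsto gaussq atTop (𝓝 0) := by
  have hinv : Tendsto (fun s : ℝ => (s * √(2 * π))⁻¹) atTop (𝓝 0) :=
    (tendsto_id.atTop_mul_const (by positivity)).inv_tendsto_atTop
  refine tendsto_of_tendsto_of_tendsto_of_le_of_le' tendsto_const_nhds hinv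
    (Eventually.of_forall gaussq_nonneg) ?_
  filter_upwards [eventually_gt_atTop 0] with s hs using gaussq_le_inv hs

lemma gaussq_zero : gaussq 0 = 1 / 2 := by
  simp [gaussq, gaussQ_zero]

@[fun_prop]
lemma continuous_gaussq : Continuous gaussq := by
  unfold gaussq
  fun_prop

lemma abs_log_sub_add_sq_le {x : ℝ} (hx : |x - 1| ≤ 1 / 2) :
    |log x - (x - 1) + (x - 1) ^ 2 / 2| ≤ 2 * |x - 1| ^ 3 := by
  have hy : |1 - x| = |x - 1| := abs_sub_comm 1 x
  have h := abs_log_sub_add_sum_range_le (x := 1 - x) (by rw [hy]; linarith) 2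
  simp only [Finset.sum_range_succ, Finset.sum_range_zero, sub_sub_cancel, hy] at h
  calc |log x - (x - 1) + (x - 1) ^ 2 / 2|
      = |0 + (1 - x) ^ (0 + 1) / ((0 : ℕ) + 1) + (1 - x) ^ (1 + 1) / ((1 : ℕ) + 1) + log x| := by
        congr 1; push_cast; ring
    _ ≤ |x - 1| ^ (2 + 1) / (1 - |x - 1|) := h
    _ ≤ |x - 1| ^ 3 / (1 / 2) := by gcongr; linarith
    _ = 2 * |x - 1| ^ 3 := by ring

theorem StrictAnti.tendsto_of_tendsto_comp {α β ι : Type*} [LinearOrder α] [TopologicalSpace α]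
    [OrderTopology α] [LinearOrder β] [TopologicalSpace β] [OrderTopology β] {f : α → β}
    (hf : StrictAnti f) {u : ι → α} {l : Filter ι} {a : α}
    (h : Tendsto (fun i => f (u i)) l (𝓝 (f a))) : Tendsto u l (𝓝 a) := by
  rw [tendsto_order] at h ⊢
  refine ⟨fun b hb => ?_, fun b hb => ?_⟩
  · filter_upwards [h.2 (f b) (hf hb)] with i hi using hf.lt_iff_gt.1 hi
  · filter_upwards [h.1 (f b) (hf hb)] with i hi using hf.lt_iff_gt.1 hi

noncomputable def approxErrorProb (n l : ℝ) : ℝ :=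
  gaussq (√(n * (l - 1) ^ 2 / 2)) * exp (-(n / 2) * (l - 1 - log l))

lemma approxErrorProb_one (n : ℝ) : approxErrorProb n 1 = 1 / 2 := by
  simp [approxErrorProb, gaussq_zero]

lemma continuousOn_approxErrorProb (n : ℝ) : ContinuousOn (approxErrorProb n) (Ioi 0) := by
  unfold approxErrorProb
  fun_prop (disch := intro y hy; exact (mem_Ioi.1 hy).ne')

lemma approxErrorProb_le_gaussq {n l : ℝ} (hn : 0 ≤ n) (hl : 0 < l) :
    approxErrorProb n l ≤ gaussq (√(n * (l - 1) ^ 2 / 2)) := by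
  refine mul_le_of_le_one_right (gaussq_nonneg _) (exp_le_one_iff.2 ?_)
  have := log_le_sub_one_of_pos hl
  nlinarith

lemma exists_approxErrorProb_eq {n Pe : ℝ} (hn : 0 < n) (hPe : Pe ∈ Ioo 0 (1 / 2)) :
    ∃ l, 1 < l ∧ approxErrorProb n l = Pe := by
  obtain ⟨s, hsPe, hs⟩ :=
    ((tendsto_gaussq_atTop.eventually (gt_mem_nhds hPe.1)).and (eventually_gt_atTop 0)).exists
  set L := 1 + s * √(2 / n)
  have hL : 1 < L := lt_add_of_pos_right 1 (by positivity)
  have hsL : √(n * (L - 1) ^ 2 / 2) = s := by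
    rw [add_sub_cancel_left, mul_pow, sq_sqrt (by positivity),
      show n * (s ^ 2 * (2 / n)) / 2 = s ^ 2 by field_simp, sqrt_sq hs.le]
  have hLPe : approxErrorProb n L < Pe :=
    (approxErrorProb_le_gaussq hn.le (by linarith)).trans_lt (hsL ▸ hsPe)
  obtain ⟨l, hl, hlPe⟩ := intermediate_value_Icc' hL.le
    ((continuousOn_approxErrorProb n).mono fun y hy => zero_lt_one.trans_le hy.1)
    ⟨hLPe.le, (approxErrorProb_one n).symm ▸ hPe.2.le⟩
  refine ⟨l, hl.1.lt_of_ne ?_, hlPe⟩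
  rintro rfl
  exact hPe.2.ne' ((approxErrorProb_one n).symm.trans hlPe)

lemma sqrt_mul_sq_div_two {n d : ℝ} (hn : 0 ≤ n) (hd : 0 ≤ d) :
    √(n * d ^ 2 / 2) = √(n / 2) * d := by
  rw [mul_div_right_comm, sqrt_mul (by positivity), sqrt_sq hd]

lemma eq_sqrt_two_div_mul {n : ℝ} (hn : 0 < n) (d : ℝ) : d = √(2 / n) * (√(n / 2) * d) := by
  rw [← mul_assoc, ← sqrt_mul (by positivity), div_mul_div_comm, mul_comm 2 n,
    div_self (by positivity), sqrt_one, one_mul]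

lemma approxErrorProb_eq_gaussQ_mul_exp {n l : ℝ} (hn : 0 ≤ n) (hl : 1 ≤ l) :
    approxErrorProb n l =
      gaussQ (√(n / 2) * (l - 1)) * exp (n / 2 * (log l - (l - 1) + (l - 1) ^ 2 / 2)) := by
  rw [approxErrorProb, sqrt_mul_sq_div_two hn (by linarith), gaussq, mul_pow,
    sq_sqrt (by positivity), mul_right_comm, ← exp_add, mul_comm]
  congr 2
  ring

lemma abs_mul_log_sub_add_sq_le {n l : ℝ} (hn : 0 ≤ n) (hl : 1 ≤ l) (hl' : l ≤ 3 / 2) :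
    |n / 2 * (log l - (l - 1) + (l - 1) ^ 2 / 2)| ≤ 2 * (√(n / 2) * (l - 1)) ^ 2 * (l - 1) := by
  have h := abs_log_sub_add_sq_le (x := l) (by rw [abs_of_nonneg (by linarith)]; linarith)
  rw [abs_mul, abs_of_nonneg (by positivity), mul_pow, sq_sqrt (by positivity)]
  rw [abs_of_nonneg (by linarith : 0 ≤ l - 1)] at h
  nlinarith

lemma sqrt_mul_sub_one_le_of_approxErrorProb_eq {n l Pe : ℝ} (hn : 0 < n) (hPe : 0 < Pe)
    (hl : 1 < l) (h : approxErrorProb n l = Pe) :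
    √(n / 2) * (l - 1) ≤ (Pe * √(2 * π))⁻¹ := by
  have hl1 : 0 < l - 1 := sub_pos.2 hl
  rw [← sqrt_mul_sq_div_two hn.le hl1.le]
  exact le_inv_of_le_gaussq hPe (sqrt_pos.2 (by positivity))
    (h ▸ approxErrorProb_le_gaussq hn.le (by linarith))

section Solutions

variable {Pe : ℝ} {l : ℕ → ℝ}

lemma tendsto_of_approxErrorProb_eq (hPe : 0 < Pe)
    (hl : ∀ n : ℕ, 1 ≤ n → 1 < l n ∧ approxErrorProb n (l n) = Pe) :
    Tendsto l atTop (𝓝 1) := by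
  have hsqrt : Tendsto (fun n : ℕ => √(2 / n)) atTop (𝓝 0) := by
    rw [← sqrt_zero]
    exact (continuous_sqrt.tendsto 0).comp (tendsto_const_div_atTop_nhds_zero_nat 2)
  have hbound : Tendsto (fun n : ℕ => 1 + √(2 / n) * (Pe * √(2 * π))⁻¹) atTop (𝓝 1) := by
    simpa using (hsqrt.mul_const (Pe * √(2 * π))⁻¹).const_add 1
  refine tendsto_of_tendsto_of_tendsto_of_le_of_le' tendsto_const_nhds hbound ?_ ?_
  all_goals filter_upwards [eventually_ge_atTop 1] with n hn
  · exact (hl n hn).1.le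
  · have hn0 : (0 : ℝ) < n := by exact_mod_cast hn
    have hsol := sqrt_mul_sub_one_le_of_approxErrorProb_eq hn0 hPe (hl n hn).1 (hl n hn).2
    have h := eq_sqrt_two_div_mul hn0 (l n - 1)
    have := mul_le_mul_of_nonneg_left hsol (sqrt_nonneg (2 / n))
    linarith

lemma tendsto_gaussQ_of_approxErrorProb_eq (hPe : 0 < Pe)
    (hl : ∀ n : ℕ, 1 ≤ n → 1 < l n ∧ approxErrorProb n (l n) = Pe) :
    Tendsto (fun n : ℕ => gaussQ (√(n / 2) * (l n - 1))) atTop (𝓝 Pe) := by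
  set M := (Pe * √(2 * π))⁻¹
  set ε := fun n : ℕ => (n : ℝ) / 2 * (log (l n) - (l n - 1) + (l n - 1) ^ 2 / 2)
  have hl1 : Tendsto (fun n => l n - 1) atTop (𝓝 0) := by
    simpa using (tendsto_of_approxErrorProb_eq hPe hl).sub_const 1
  have hε : Tendsto ε atTop (𝓝 0) := by
    refine squeeze_zero_norm' ?_ (by simpa using hl1.const_mul (2 * M ^ 2))
    filter_upwards [eventually_ge_atTop 1,
      hl1.eventually (ge_mem_nhds (by norm_num : (0 : ℝ) < 1 / 2))] with n hn hn'
    have hn0 : (0 : ℝ) < n := by exact_mod_cast hn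
    have hs := sqrt_mul_sub_one_le_of_approxErrorProb_eq hn0 hPe (hl n hn).1 (hl n hn).2
    have hd : 0 ≤ l n - 1 := by linarith [(hl n hn).1]
    refine (abs_mul_log_sub_add_sq_le hn0.le (by linarith) (by linarith)).trans ?_
    gcongr
  have hexp : Tendsto (fun n => Pe * exp (-ε n)) atTop (𝓝 Pe) := by
    simpa using hε.neg.rexp.const_mul Pe
  refine hexp.congr' ?_
  filter_upwards [eventually_ge_atTop 1] with n hn
  have h := approxErrorProb_eq_gaussQ_mul_exp (n := n) (by positivity) (hl n hn).1.le
  rw [(hl n hn).2] at h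
  rw [h, mul_assoc, ← exp_add, add_neg_cancel, exp_zero, mul_one]

end Solutions

lemma isLittleO_sub_sqrt_of_tendsto {l : ℕ → ℝ} {x : ℝ}
    (h : Tendsto (fun n : ℕ => √(n / 2) * (l n - 1)) atTop (𝓝 √x)) :
    (fun n : ℕ => l n - 1 - √(2 * x / n)) =o[atTop] (fun n : ℕ => 1 / √n) := by
  have h0 : (fun n : ℕ => √2 * (√(n / 2) * (l n - 1) - √x)) =o[atTop] (fun _ => (1 : ℝ)) :=
    (isLittleO_one_iff ℝ).2 (by simpa using (h.sub_const √x).const_mul √2)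
  refine (h0.mul_isBigO (isBigO_refl (fun n : ℕ => 1 / √n) atTop)).congr' ?_
    (by simp only [one_mul]; rfl)
  filter_upwards [eventually_gt_atTop 0] with n hn
  have hn0 : (0 : ℝ) < n := by exact_mod_cast hn
  have h2 : √2 * √(n / 2) = √n := by
    rw [← sqrt_mul zero_le_two, mul_div_cancel₀ _ two_ne_zero]
  rw [sqrt_div' _ hn0.le, sqrt_mul zero_le_two]
  field_simp
  linear_combination (l n - 1) * h2

lemma isEquivalent_logb_of_tendsto {l : ℕ → ℝ} {x : ℝ} (hx : 0 < x)
    (h : Tendsto (fun n : ℕ => √(n / 2) * (l n - 1)) atTop (𝓝 √x))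
    (hl : Tendsto l atTop (𝓝 1)) :
    (fun n : ℕ => 10 * logb 10 (l n)) ~[atTop]
      (fun n : ℕ => 10 * logb 10 (exp 1) * √(2 / n) * √x) := by
  have hlog : log ~[𝓝 1] fun y => y - 1 := by
    have h := hasDerivAt_iff_isLittleO.1 (hasDerivAt_log one_ne_zero)
    simp only [log_one, inv_one, smul_eq_mul, mul_one, sub_zero] at h
    exact h.isEquivalent
  have hs : (fun n : ℕ => √(n / 2) * (l n - 1)) ~[atTop] fun _ => √x :=
    (isEquivalent_const_iff_tendsto (sqrt_pos.2 hx).ne').2 h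
  have hd : (fun n : ℕ => l n - 1) =ᶠ[atTop] fun n => √(2 / n) * (√(n / 2) * (l n - 1)) := by
    filter_upwards [eventually_gt_atTop 0] with n hn
    exact eq_sqrt_two_div_mul (by exact_mod_cast hn) _
  have key := (IsEquivalent.refl (u := fun _ : ℕ => 10 / log 10)).mul
    (((hlog.comp_tendsto hl).congr_right hd).trans (IsEquivalent.refl.mul hs))
  refine (key.congr_left (Eventually.of_forall fun n => ?_)).congr_right
    (Eventually.of_forall fun n => ?_)
  · simp only [Pi.mul_apply, Function.comp_apply, logb]
    ring
  · simp only [Pi.mul_apply, logb, log_exp]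
    ring

/-- For fixed `P_e ∈ (0, 1/2)` and each `n ≥ 1`, the equation
`q(√(n(λ'−1)²/2)) e^{−(n/2)(λ'−1−ln λ')} = P_e` has a solution `λ' > 1`; as
`n → ∞` any such solution satisfies `λ' = 1 + √(2x/n) + o(1/√n)` where `x`
solves `Q(√x) = P_e` (i.e. `√x = Q⁻¹(P_e)`); consequently
`10 log₁₀ λ' ∼ 10 log₁₀(e) √(2/n) Q⁻¹(P_e)`. -/
theorem stmt_18 (Pe : ℝ) (hPe : Pe ∈ Set.Ioo 0 (1 / 2 : ℝ))
    (x : ℝ) (hx : 0 < x) (hxQ : gaussQ (Real.sqrt x) = Pe) :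
    (∀ n : ℕ, 1 ≤ n → ∃ l : ℝ, 1 < l ∧
      gaussq (Real.sqrt ((n : ℝ) * (l - 1) ^ 2 / 2)) *
        Real.exp (-((n : ℝ) / 2) * (l - 1 - Real.log l)) = Pe) ∧
    ∀ l : ℕ → ℝ,
      (∀ n : ℕ, 1 ≤ n → 1 < l n ∧
        gaussq (Real.sqrt ((n : ℝ) * (l n - 1) ^ 2 / 2)) *
          Real.exp (-((n : ℝ) / 2) * (l n - 1 - Real.log (l n))) = Pe) →
      (fun n : ℕ => l n - 1 - Real.sqrt (2 * x / (n : ℝ))) =o[atTop]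
        (fun n : ℕ => 1 / Real.sqrt (n : ℝ)) ∧
      (fun n : ℕ => 10 * Real.logb 10 (l n)) ~[atTop]
        (fun n : ℕ => 10 * Real.logb 10 (Real.exp 1) *
          Real.sqrt (2 / (n : ℝ)) * Real.sqrt x) := by
  refine ⟨fun n hn => exists_approxErrorProb_eq (Nat.cast_pos.2 hn) hPe, fun l hl => ?_⟩
  have hs : Tendsto (fun n : ℕ => √(n / 2) * (l n - 1)) atTop (𝓝 √x) :=
    gaussQ_strictAnti.tendsto_of_tendsto_comp (hxQ ▸ tendsto_gaussQ_of_approxErrorProb_eq hPe.1 hl)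
  exact ⟨isLittleO_sub_sqrt_of_tendsto hs,
    isEquivalent_logb_of_tendsto hx hs (tendsto_of_approxErrorProb_eq hPe.1 hl)⟩
end
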